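/- Let 𝕊 ⊆ ℝ^ℓ (ℓ ≥ 2) be a state space, let D : ℝ^ℓ → ℝⁿ be a linear map, and let A ⊆ (ker D)^⊥ be a nonempty bounded set contained in the support of D. Then the image under D of the data-driven inference of A equals the data-driven inference of the image: {D(Y) : Y ∈ ddi(A | 𝕊)} = ddi(D(A) | 𝕊), where D(Y) = {D y : y ∈ Y}. -/

import Mathlib

/-!
On `span A ⊇ aff A` the map `D` is injective, so it has a linear left inverse `Q` there, and
`Y ↦ D(Y)`, `R ↦ Q(R)` are mutually inverse bijections between the admissible sets for `A` and
those for `D(A)`. Both affine spans have the same dimension `d`, and on subsets of `aff A` the map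
`D` multiplies `μH[d]` by the fixed factor `normDet (D|_{dir aff A}) ≠ 0`, so minimality of the
Hausdorff measure is preserved in both directions.
-/

open MeasureTheory Metric Set

noncomputable section

/-- `Euc n` is the Euclidean space `ℝⁿ`. -/
abbrev Euc (n : ℕ) : Type := EuclideanSpace ℝ (Fin n)

/-- A state space of linear dimension `ℓ`: a compact convex set contained in (and affinely
spanning) an affine hyperplane not through the origin, here written as `{x | f x = 1}`
for a nonzero linear functional `f`. -/
def IsStateSpace {ℓ : ℕ} (𝕊 : Set (Euc ℓ)) : Prop :=
  IsCompact 𝕊 ∧ Convex ℝ 𝕊 ∧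
    ∃ f : Euc ℓ →ₗ[ℝ] ℝ, f ≠ 0 ∧
      (affineSpan ℝ 𝕊 : Set (Euc ℓ)) = {x | f x = 1}

/-- `R` is admissible for the data set `X` (w.r.t. the state space `𝕊`): it is the image of `𝕊`
under some linear map and satisfies `X ⊆ R ⊆ aff X`. -/
def Admissible {ℓ n : ℕ} (𝕊 : Set (Euc ℓ)) (X R : Set (Euc n)) : Prop :=
  (∃ M : Euc ℓ →ₗ[ℝ] Euc n, R = M '' 𝕊) ∧ X ⊆ R ∧ R ⊆ (affineSpan ℝ X : Set (Euc n))

/-- Data-driven inference: the admissible sets for `X` of minimal `d`-dimensional Hausdorff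
measure, where `d = dim aff X`. -/
def ddi {ℓ n : ℕ} (X : Set (Euc n)) (𝕊 : Set (Euc ℓ)) : Set (Set (Euc n)) :=
  {R | Admissible 𝕊 X R ∧ ∀ R' : Set (Euc n), Admissible 𝕊 X R' →
      μH[(Module.finrank ℝ (affineSpan ℝ X).direction : ℝ)] R ≤
        μH[(Module.finrank ℝ (affineSpan ℝ X).direction : ℝ)] R'}

/-- A (hyper)-ellipsoid state space in `ℝ^ℓ`: the image of the closed unit ball of `ℝ^(ℓ-1)`
under an injective affine map. -/
def IsHyperEllipsoid {ℓ : ℕ} (𝕊 : Set (Euc ℓ)) : Prop :=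
  ∃ F : Euc (ℓ - 1) →ᵃ[ℝ] Euc ℓ, Function.Injective F ∧ 𝕊 = F '' closedBall 0 1

open Module
open scoped Pointwise ENNReal

section HausdorffMeasure

variable {E F : Type*} [NormedAddCommGroup E] [InnerProductSpace ℝ E] [FiniteDimensional ℝ E]
  [NormedAddCommGroup F] [InnerProductSpace ℝ F]

theorem LinearMap.normDet_comp_subtype_ne_zero {f : E →ₗ[ℝ] F} {W : Submodule ℝ E}
    (hf : InjOn f W) : (f ∘ₗ W.subtype).normDet ≠ 0 := by
  rw [Ne, LinearMap.normDet_eq_zero_iff_ker_ne_bot, not_not]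
  exact LinearMap.ker_eq_bot.mpr (injOn_iff_injective.mp hf)

variable [MeasurableSpace E] [BorelSpace E] [MeasurableSpace F] [BorelSpace F]

theorem LinearMap.hausdorffMeasure_image_of_subset_submodule (f : E →ₗ[ℝ] F)
    (W : Submodule ℝ E) {S : Set E} (hS : S ⊆ W) :
    μH[finrank ℝ W] (f '' S) = ENNReal.ofReal (f ∘ₗ W.subtype).normDet * μH[finrank ℝ W] S := by
  obtain ⟨S', rfl⟩ : ∃ S' : Set W, W.subtype '' S' = S :=
    subset_range_iff_exists_image_eq.mp (by simpa using hS)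
  rw [← image_comp, ← LinearMap.coe_comp, LinearMap.hausdorffMeasure_image,
    show (W.subtype : W → E) = W.subtypeₗᵢ from rfl,
    W.subtypeₗᵢ.isometry.hausdorffMeasure_image (Or.inl (Nat.cast_nonneg _))]

theorem LinearMap.hausdorffMeasure_image_of_subset_affineSubspace (f : E →ₗ[ℝ] F)
    (P : AffineSubspace ℝ E) {S : Set E} (hS : S ⊆ P) :
    μH[finrank ℝ P.direction] (f '' S) =
      ENNReal.ofReal (f ∘ₗ P.direction.subtype).normDet * μH[finrank ℝ P.direction] S := by
  rcases S.eq_empty_or_nonempty with rfl | ⟨p, hp⟩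
  · simp
  have hS₀ : -p +ᵥ S ⊆ P.direction := by
    rintro _ ⟨s, hs, rfl⟩
    simpa [neg_add_eq_sub] using AffineSubspace.vsub_mem_direction (hS hs) (hS hp)
  have hfS : f '' S = f p +ᵥ f '' (-p +ᵥ S) := by
    rw [← image_vadd, ← image_vadd, image_image, image_image]
    simp [vadd_eq_add]
  have hd : (0 : ℝ) ≤ finrank ℝ P.direction := Nat.cast_nonneg _
  rw [hfS, hausdorffMeasure_vadd _ (.inl hd), f.hausdorffMeasure_image_of_subset_submodule _ hS₀,
    hausdorffMeasure_vadd _ (.inl hd)]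

end HausdorffMeasure

theorem LinearMap.exists_leftInvOn_of_injOn {K E F : Type*} [Field K] [AddCommGroup E] [Module K E]
    [AddCommGroup F] [Module K F] (f : E →ₗ[K] F) {V : Submodule K E} (hf : InjOn f V) :
    ∃ g : F →ₗ[K] E, LeftInvOn g f V := by
  obtain ⟨g, hg⟩ := (f ∘ₗ V.subtype).exists_leftInverse_of_injective
    (LinearMap.ker_eq_bot.mpr (injOn_iff_injective.mp hf))
  exact ⟨V.subtype ∘ₗ g, fun x hx => congrArg Subtype.val (LinearMap.congr_fun hg ⟨x, hx⟩)⟩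

theorem LinearMap.affineSpan_image {k V W : Type*} [Ring k] [AddCommGroup V] [Module k V]
    [AddCommGroup W] [Module k W] (f : V →ₗ[k] W) (s : Set V) :
    affineSpan k (f '' s) = (affineSpan k s).map f.toAffineMap :=
  (AffineSubspace.map_span f.toAffineMap s).symm

theorem LinearMap.coe_affineSpan_image {k V W : Type*} [Ring k] [AddCommGroup V] [Module k V]
    [AddCommGroup W] [Module k W] (f : V →ₗ[k] W) (s : Set V) :
    (affineSpan k (f '' s) : Set W) = f '' affineSpan k s := by
  rw [f.affineSpan_image, AffineSubspace.coe_map, LinearMap.coe_toAffineMap]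

theorem LinearMap.finrank_direction_affineSpan_image {k V W : Type*} [Field k] [AddCommGroup V]
    [Module k V] [AddCommGroup W] [Module k W] {f : V →ₗ[k] W} {s : Set V}
    (hf : InjOn f (affineSpan k s).direction) :
    finrank k (affineSpan k (f '' s)).direction = finrank k (affineSpan k s).direction := by
  rw [f.affineSpan_image, AffineSubspace.map_direction, LinearMap.toAffineMap_linear]
  have h := LinearMap.finrank_range_of_inj (f := f ∘ₗ (affineSpan k s).direction.subtype)
    (injOn_iff_injective.mp hf)
  rwa [LinearMap.range_comp, Submodule.range_subtype] at h

section DataDrivenInference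

variable {ℓ m n : ℕ} {𝕊 : Set (Euc ℓ)} {X Y : Set (Euc m)}

theorem Admissible.image (h : Admissible 𝕊 X Y) (D : Euc m →ₗ[ℝ] Euc n) :
    Admissible 𝕊 (D '' X) (D '' Y) := by
  obtain ⟨⟨M, rfl⟩, hXY, hY⟩ := h
  refine ⟨⟨D ∘ₗ M, by rw [LinearMap.coe_comp, image_comp]⟩, image_mono hXY, ?_⟩
  rw [D.coe_affineSpan_image]
  exact image_mono hY

variable {D : Euc m →ₗ[ℝ] Euc n} {Q : Euc n →ₗ[ℝ] Euc m} {R : Set (Euc n)}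

theorem Admissible.image_of_leftInvOn (hQ : LeftInvOn Q D (affineSpan ℝ X))
    (h : Admissible 𝕊 (D '' X) R) : Admissible 𝕊 X (Q '' R) := by
  obtain ⟨⟨M, rfl⟩, hXR, hR⟩ := h
  refine ⟨⟨Q ∘ₗ M, by rw [LinearMap.coe_comp, image_comp]⟩, fun x hx => ?_, ?_⟩
  · exact ⟨D x, hXR (mem_image_of_mem D hx), hQ (subset_affineSpan ℝ X hx)⟩
  · rw [D.coe_affineSpan_image] at hR
    exact (image_mono hR).trans hQ.image_image.le

theorem Admissible.image_image_of_leftInvOn (hQ : LeftInvOn Q D (affineSpan ℝ X))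
    (h : Admissible 𝕊 (D '' X) R) : D '' (Q '' R) = R := by
  have hR := h.2.2
  rw [D.coe_affineSpan_image] at hR
  rw [image_image, image_congr fun y hy => hQ.rightInvOn_image (hR hy), image_id']

/-- Injectivity on `span ℝ X`, not merely on `aff X`, is what makes the inverse map linear, as
admissibility demands. -/
theorem image_ddi_of_injOn (hD : InjOn D (Submodule.span ℝ X)) :
    (D '' ·) '' ddi X 𝕊 = ddi (D '' X) 𝕊 := by
  set W := (affineSpan ℝ X).direction
  have hDW : InjOn D W := hD.mono <| by
    simpa using AffineSubspace.direction_le (affineSpan_le_toAffineSubspace_span (s := X))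
  obtain ⟨Q, hQ⟩ := D.exists_leftInvOn_of_injOn hD
  replace hQ : LeftInvOn Q D (affineSpan ℝ X) := hQ.mono affineSpan_subset_span
  set c := ENNReal.ofReal (D ∘ₗ W.subtype).normDet
  have hc : c ≠ 0 := (ENNReal.ofReal_pos.mpr <|
    (LinearMap.normDet_nonneg _).lt_of_ne' (LinearMap.normDet_comp_subtype_ne_zero hDW)).ne'
  have hμ : ∀ Y, Admissible 𝕊 X Y →
      μH[finrank ℝ (affineSpan ℝ (D '' X)).direction] (D '' Y) = c * μH[finrank ℝ W] Y := by
    intro Y hY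
    rw [LinearMap.finrank_direction_affineSpan_image hDW]
    exact D.hausdorffMeasure_image_of_subset_affineSubspace _ hY.2.2
  ext R
  constructor
  · rintro ⟨Y, ⟨hY, hYmin⟩, rfl⟩
    refine ⟨hY.image D, fun R' hR' => ?_⟩
    have hQR' := hR'.image_of_leftInvOn hQ
    rw [← hR'.image_image_of_leftInvOn hQ, hμ _ hY, hμ _ hQR']
    exact mul_le_mul_right (hYmin _ hQR') c
  · rintro ⟨hR, hRmin⟩
    have hQR := hR.image_of_leftInvOn hQ
    refine ⟨Q '' R, ⟨hQR, fun Y hY => ?_⟩, hR.image_image_of_leftInvOn hQ⟩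
    have hle := hRmin _ (hY.image D)
    rw [← hR.image_image_of_leftInvOn hQ, hμ _ hQR, hμ _ hY] at hle
    exact (ENNReal.mul_le_mul_iff_right hc ENNReal.ofReal_ne_top).mp hle

end DataDrivenInference

theorem stmt_12_general {ℓ n : ℕ} (𝕊 : Set (Euc ℓ))
    (D : Euc ℓ →ₗ[ℝ] Euc n) (A : Set (Euc ℓ))
    (hsub : A ⊆ ((LinearMap.ker D)ᗮ : Set (Euc ℓ))) :
    (fun Y : Set (Euc ℓ) => D '' Y) '' ddi A 𝕊 = ddi (D '' A) 𝕊 :=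
  image_ddi_of_injOn <| LinearMap.injOn_of_disjoint_ker (Submodule.span_le.mpr hsub)
    (Submodule.orthogonal_disjoint _).symm

theorem stmt_12 {ℓ n : ℕ} (hℓ : 2 ≤ ℓ) (𝕊 : Set (Euc ℓ)) (hS : IsStateSpace 𝕊)
    (D : Euc ℓ →ₗ[ℝ] Euc n) (A : Set (Euc ℓ)) (hne : A.Nonempty)
    (hbd : Bornology.IsBounded A)
    (hsub : A ⊆ ((LinearMap.ker D)ᗮ : Set (Euc ℓ))) :
    (fun Y : Set (Euc ℓ) => D '' Y) '' ddi A 𝕊 = ddi (D '' A) 𝕊 :=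
  stmt_12_general 𝕊 D A hsub
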